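/- Let G be an infinite connected amenable graph of bounded degree with partial self-isomorphisms, and suppose C₁/(log n)^α ≤ Λ(n) ≤ C₂/(log n)^β for constants C₁, C₂, α, β > 0 and all n ≥ 2. Then there is a constant K₁ > 0 such that for infinitely many integers N, Sep(N)/N ≥ K₁·Λ(N)/(log N)^{α/β}. -/

import Mathlib

open Set Filter

namespace SepProfile

variable {V : Type*}

/-- Edge boundary of a vertex set: pairs (a,b) with a ∈ A, b ∉ A, a ~ b. -/
def ebd (G : SimpleGraph V) (A : Set V) : Set (V × V) :=
  {p | G.Adj p.1 p.2 ∧ p.1 ∈ A ∧ p.2 ∉ A}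

/-- Isoperimetric ratio |∂A|/|A|. -/
noncomputable def ratio (G : SimpleGraph V) (A : Set V) : ℝ :=
  ((ebd G A).ncard : ℝ) / (A.ncard : ℝ)

/-- Isoperimetric profile Λ(n). -/
noncomputable def isop (G : SimpleGraph V) (n : ℕ) : ℝ :=
  sInf {x | ∃ A : Set V, A.Finite ∧ A.Nonempty ∧ A.ncard ≤ n ∧ x = ratio G A}

/-- Boundary of A within F (edges of the induced subgraph on F leaving A). -/
def inbd (G : SimpleGraph V) (F A : Set V) : Set (V × V) :=
  {p | G.Adj p.1 p.2 ∧ p.1 ∈ A ∧ p.2 ∈ F \ A}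

/-- Cheeger constant of the subgraph induced on F. -/
noncomputable def cheeger (G : SimpleGraph V) (F : Set V) : ℝ :=
  sInf {x | ∃ A : Set V, A ⊆ F ∧ A.Nonempty ∧ 2 * A.ncard ≤ F.ncard ∧
    x = ((inbd G F A).ncard : ℝ) / (A.ncard : ℝ)}

/-- Separation profile Sep(n) = sup_{|F| ≤ n} |F|·h(F). -/
noncomputable def sep (G : SimpleGraph V) (n : ℕ) : ℝ :=
  sSup {x | ∃ F : Set V, F.Finite ∧ F.ncard ≤ n ∧ x = (F.ncard : ℝ) * cheeger G F}

/-- A finite set is optimal if it realizes the isoperimetric profile. -/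
def Optimal (G : SimpleGraph V) (F : Set V) : Prop :=
  F.Finite ∧ F.Nonempty ∧ ratio G F = isop G F.ncard

/-- An integer is optimal if some optimal set has that cardinality. -/
def OptimalInt (G : SimpleGraph V) (n : ℕ) : Prop :=
  ∃ F : Set V, Optimal G F ∧ F.ncard = n

/-- Ball of radius n around v for the graph metric. -/
def ball (G : SimpleGraph V) (v : V) (n : ℕ) : Set V :=
  {u | G.Reachable v u ∧ G.dist v u ≤ n}

/-- All degrees bounded by D. -/
def DegLE (G : SimpleGraph V) (D : ℕ) : Prop :=
  ∀ v, (G.neighborSet v).ncard ≤ D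

/-- Amenability: the isoperimetric profile tends to 0. -/
def Amenable (G : SimpleGraph V) : Prop :=
  Tendsto (fun n => isop G n) atTop (nhds 0)

/-- F together with its outer vertex neighbourhood. -/
def nbh (G : SimpleGraph V) (F : Set V) : Set V :=
  F ∪ {b | ∃ a ∈ F, G.Adj a b}

/-- Partial self-isomorphisms: every finite F has a disjoint isomorphic copy
(together with its boundary neighbourhood). -/
def HasPSI (G : SimpleGraph V) : Prop :=
  ∀ F : Set V, F.Finite →
    ∃ F' : Set V, F'.Finite ∧ Disjoint F F' ∧
      ∃ e : G.induce (nbh G F) ≃g G.induce (nbh G F'),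
        ∀ x : nbh G F, (x : V) ∈ F ↔ ((e x : V) ∈ F')

/-- δ-geometric decay function p_f^δ(x) = inf {y > 0 : f(y) ≤ δ·f(x)}. -/
noncomputable def gdecay (f : ℝ → ℝ) (δ x : ℝ) : ℝ :=
  sInf {y | 0 < y ∧ f y ≤ δ * f x}

end SepProfile

open SepProfile Real

/-!
The lower bound `Λ ≥ C₁/(log n)^α > 0` makes every edge boundary of a finite set finite and
lets `Λ` be attained by optimal sets. The upper bound `Λ ≤ C₂/(log n)^β` forces `Λ` to halve
between `n` and `2^t n` for some `t ≈ (log n)^(α/β)`, so along the chain `n, 2n, …, 2^t n` some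
step `m ↦ 2m` loses at least `Λ(n)/(2t)`. An optimal set `F` realising `Λ(2m)` then has
`m < |F| ≤ 2m`, and for `A ⊆ F` with `2|A| ≤ |F|` the identity
`|∂A| + |∂(F \ A)| = 2 |∂_F A| + |∂F|`, together with `|∂A| ≥ Λ(m)|A|` and
`|∂(F \ A)| ≥ Λ(|F|)|F \ A|`, gives `h(F) ≥ (Λ(m) - Λ(2m))/2 ≥ Λ(n)/(4t)`.
-/

theorem csInf_mem_of_finite_inter_Iic {α : Type*} [ConditionallyCompleteLinearOrder α]
    {S : Set α} {x₀ : α} (hx₀ : x₀ ∈ S) (hbdd : BddBelow S) (hfin : (S ∩ Iic x₀).Finite) :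
    sInf S ∈ S := by
  have hne : (S ∩ Iic x₀).Nonempty := ⟨x₀, hx₀, le_rfl⟩
  have hbdd' : BddBelow (S ∩ Iic x₀) := hbdd.mono inter_subset_left
  suffices sInf S = sInf (S ∩ Iic x₀) from this ▸ (hne.csInf_mem hfin).1
  refine le_antisymm (csInf_le_csInf hbdd hne inter_subset_left) (le_csInf ⟨x₀, hx₀⟩ fun s hs => ?_)
  rcases le_total s x₀ with h | h
  · exact csInf_le hbdd' ⟨hs, h⟩
  · exact (csInf_le hbdd' ⟨hx₀, le_rfl⟩).trans h

theorem Real.sInf_le_of_forall_le {S : Set ℝ} {c : ℝ} (hbdd : BddBelow S) (hc : 0 ≤ c)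
    (h : ∀ x ∈ S, x ≤ c) : sInf S ≤ c := by
  rcases S.eq_empty_or_nonempty with rfl | ⟨x, hx⟩
  · rwa [Real.sInf_empty]
  · exact (csInf_le hbdd hx).trans (h x hx)

theorem exists_sub_succ_ge_div {f : ℕ → ℝ} {t : ℕ} (ht : 0 < t) :
    ∃ i < t, (f 0 - f t) / t ≤ f i - f (i + 1) := by
  by_contra! h
  have hlt := Finset.sum_lt_sum_of_nonempty (Finset.nonempty_range_iff.2 ht.ne')
    fun i hi => h i (Finset.mem_range.1 hi)
  rw [Finset.sum_range_sub', Finset.sum_const, Finset.card_range, nsmul_eq_mul,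
    mul_div_cancel₀ _ (by positivity)] at hlt
  exact lt_irrefl _ hlt

namespace SepProfile

variable {V : Type*} (G : SimpleGraph V)

theorem ratio_nonneg (A : Set V) : 0 ≤ ratio G A := by
  unfold ratio
  positivity

theorem isop_nonneg (n : ℕ) : 0 ≤ isop G n :=
  Real.sInf_nonneg (by rintro _ ⟨A, -, -, -, rfl⟩; exact ratio_nonneg G A)

theorem isop_le_ratio {A : Set V} (hA : A.Finite) (hne : A.Nonempty) {n : ℕ}
    (h : A.ncard ≤ n) : isop G n ≤ ratio G A :=
  csInf_le ⟨0, by rintro _ ⟨A, -, -, -, rfl⟩; exact ratio_nonneg G A⟩ ⟨A, hA, hne, h, rfl⟩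

theorem isop_anti [Nonempty V] {k l : ℕ} (hk : 1 ≤ k) (hkl : k ≤ l) : isop G l ≤ isop G k := by
  obtain ⟨v⟩ := ‹Nonempty V›
  refine le_csInf ⟨_, {v}, finite_singleton v, singleton_nonempty v, by simpa using hk, rfl⟩ ?_
  rintro _ ⟨A, hA, hne, hcard, rfl⟩
  exact isop_le_ratio G hA hne (hcard.trans hkl)

theorem isop_mul_ncard_le {A : Set V} (hA : A.Finite) (hne : A.Nonempty) {k : ℕ}
    (hk : A.ncard ≤ k) : isop G k * A.ncard ≤ (ebd G A).ncard := by
  have h := isop_le_ratio G hA hne hk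
  rwa [ratio, le_div_iff₀ (by exact_mod_cast (ncard_pos hA).2 hne)] at h

theorem ebd_finite_of_isop_pos (hpos : ∀ n, 2 ≤ n → 0 < isop G n) {A : Set V} (hA : A.Finite)
    (hne : A.Nonempty) : (ebd G A).Finite := by
  by_contra h
  have := (hpos _ (le_max_left 2 A.ncard)).trans_le (isop_le_ratio G hA hne (le_max_right 2 _))
  simp [ratio, Set.Infinite.ncard h] at this

theorem exists_optimal_isop_eq [Nonempty V] {k : ℕ} (hk : 1 ≤ k) :
    ∃ F, Optimal G F ∧ F.ncard ≤ k ∧ isop G F.ncard = isop G k := by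
  obtain ⟨v⟩ := ‹Nonempty V›
  set S := {x | ∃ A : Set V, A.Finite ∧ A.Nonempty ∧ A.ncard ≤ k ∧ x = ratio G A}
  set x₀ := ratio G {v}
  have hx₀ : x₀ ∈ S := ⟨{v}, finite_singleton v, singleton_nonempty v, by simpa using hk, rfl⟩
  -- a ratio `a / b ≤ x₀` with `b ≤ k` has `a ≤ x₀ k`
  have hfin : (S ∩ Iic x₀).Finite := by
    refine (((finite_Iic ⌊x₀ * k⌋₊).prod (finite_Iic k)).image
      fun p : ℕ × ℕ => (p.1 : ℝ) / p.2).subset ?_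
    rintro _ ⟨⟨A, hA, hne, hcard, rfl⟩, hle⟩
    refine ⟨((ebd G A).ncard, A.ncard), ⟨Nat.le_floor ?_, hcard⟩, rfl⟩
    rw [mem_Iic, ratio, div_le_iff₀ (by exact_mod_cast (ncard_pos hA).2 hne)] at hle
    exact hle.trans (by gcongr; exact ratio_nonneg G {v})
  obtain ⟨F, hF, hne, hcard, heq⟩ :=
    csInf_mem_of_finite_inter_Iic hx₀
      ⟨0, by rintro _ ⟨A, -, -, -, rfl⟩; exact ratio_nonneg G A⟩ hfin
  have hle : isop G F.ncard ≤ isop G k := (isop_le_ratio G hF hne le_rfl).trans_eq heq.symm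
  have hge : isop G k ≤ isop G F.ncard := isop_anti G ((ncard_pos hF).2 hne) hcard
  exact ⟨F, ⟨hF, hne, heq.symm.trans (le_antisymm hge hle)⟩, hcard, le_antisymm hle hge⟩

theorem cheeger_nonneg (F : Set V) : 0 ≤ cheeger G F :=
  Real.sInf_nonneg (by rintro _ ⟨A, -, -, -, rfl⟩; positivity)

theorem cheeger_le_ncard {F : Set V} (hF : F.Finite) : cheeger G F ≤ F.ncard := by
  refine Real.sInf_le_of_forall_le ⟨0, by rintro _ ⟨A, -, -, -, rfl⟩; positivity⟩
    (by positivity) ?_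
  rintro _ ⟨A, hAF, hne, -, rfl⟩
  have hA := hF.subset hAF
  have hcard : (inbd G F A).ncard ≤ A.ncard * F.ncard :=
    ncard_prod ▸ ncard_le_ncard (fun p hp => ⟨hp.2.1, hp.2.2.1⟩) (hA.prod hF)
  rw [div_le_iff₀ (by exact_mod_cast (ncard_pos hA).2 hne), mul_comm]
  exact_mod_cast hcard

theorem ncard_mul_cheeger_le_sep {F : Set V} (hF : F.Finite) {N : ℕ} (hN : F.ncard ≤ N) :
    F.ncard * cheeger G F ≤ sep G N := by
  refine le_csSup ⟨N * N, ?_⟩ ⟨F, hF, hN, rfl⟩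
  rintro _ ⟨F', hF', hN', rfl⟩
  have hN'' : (F'.ncard : ℝ) ≤ N := by exact_mod_cast hN'
  exact mul_le_mul hN'' ((cheeger_le_ncard G hF').trans hN'') (cheeger_nonneg G F')
    (Nat.cast_nonneg N)

theorem encard_ebd_add_encard_ebd_sdiff {F A : Set V} (hAF : A ⊆ F) :
    (ebd G A).encard + (ebd G (F \ A)).encard =
      2 * (inbd G F A).encard + (ebd G F).encard := by
  set J₁ := {p : V × V | G.Adj p.1 p.2 ∧ p.1 ∈ A ∧ p.2 ∉ F}
  set J₂ := {p : V × V | G.Adj p.1 p.2 ∧ p.1 ∈ F \ A ∧ p.2 ∉ F}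
  have hA : ebd G A = inbd G F A ∪ J₁ := by
    ext ⟨a, b⟩
    have := @hAF b
    simp only [ebd, inbd, J₁, mem_ofPred_eq, mem_union, Set.mem_sdiff]
    tauto
  have hFA : ebd G (F \ A) = Prod.swap '' inbd G F A ∪ J₂ := by
    ext ⟨a, b⟩
    have := @hAF b
    simp only [ebd, inbd, J₂, image_swap_eq_preimage_swap, mem_preimage, Prod.swap_prod_mk,
      mem_ofPred_eq, mem_union, Set.mem_sdiff, G.adj_comm b a]
    tauto
  have hF : ebd G F = J₁ ∪ J₂ := by
    ext ⟨a, b⟩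
    have := @hAF a
    simp only [ebd, J₁, J₂, mem_ofPred_eq, mem_union, Set.mem_sdiff]
    tauto
  rw [hA, hFA, hF, encard_union_eq, encard_union_eq, encard_union_eq,
    Prod.swap_injective.encard_image]
  · ring
  all_goals
    rw [Set.disjoint_left]
    rintro ⟨a, b⟩
    simp only [inbd, J₁, J₂, image_swap_eq_preimage_swap, mem_preimage, Prod.swap_prod_mk,
      mem_ofPred_eq, Set.mem_sdiff]
    have := @hAF b
    tauto

theorem ncard_ebd_add_ncard_ebd_sdiff {F A : Set V} (hAF : A ⊆ F) (hA : (ebd G A).Finite)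
    (hFA : (ebd G (F \ A)).Finite) :
    (ebd G A).ncard + (ebd G (F \ A)).ncard = 2 * (inbd G F A).ncard + (ebd G F).ncard := by
  have hI : (inbd G F A).Finite := hA.subset fun p hp => ⟨hp.1, hp.2.1, hp.2.2.2⟩
  have hF : (ebd G F).Finite := (hA.union hFA).subset fun p ⟨hadj, ha, hb⟩ => by
    by_cases h : p.1 ∈ A
    exacts [Or.inl ⟨hadj, h, fun hb' => hb (hAF hb')⟩, Or.inr ⟨hadj, ⟨ha, h⟩, fun hb' => hb hb'.1⟩]
  have h := encard_ebd_add_encard_ebd_sdiff G hAF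
  rw [← hA.cast_ncard_eq, ← hFA.cast_ncard_eq, ← hI.cast_ncard_eq, ← hF.cast_ncard_eq] at h
  exact_mod_cast h

theorem isop_sub_isop_div_two_le_cheeger
    (hfin : ∀ A : Set V, A.Finite → A.Nonempty → (ebd G A).Finite)
    {F : Set V} (hF : Optimal G F) {m : ℕ} (hm : F.ncard ≤ 2 * m) (h2 : 2 ≤ F.ncard) :
    (isop G m - isop G F.ncard) / 2 ≤ cheeger G F := by
  obtain ⟨hFfin, ⟨v, hv⟩, hFopt⟩ := hF
  refine le_csInf
    ⟨_, {v}, singleton_subset_iff.2 hv, singleton_nonempty v, by simpa using h2, rfl⟩ ?_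
  rintro _ ⟨A, hAF, hAne, hAcard, rfl⟩
  have hA := hFfin.subset hAF
  have hApos : 0 < A.ncard := (ncard_pos hA).2 hAne
  have hFAcard := ncard_sdiff_add_ncard_of_subset hAF hFfin
  have hFA : (F \ A).Nonempty := (ncard_pos hFfin.sdiff).1 (by omega)
  have hsplit : ((ebd G A).ncard : ℝ) + (ebd G (F \ A)).ncard =
      2 * (inbd G F A).ncard + (ebd G F).ncard := by
    exact_mod_cast ncard_ebd_add_ncard_ebd_sdiff G hAF (hfin A hA hAne) (hfin _ hFfin.sdiff hFA)
  have hAbd := isop_mul_ncard_le G hA hAne (k := m) (by omega)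
  have hFAbd := isop_mul_ncard_le G hFfin.sdiff hFA (k := F.ncard) (by omega)
  have hFbd : isop G F.ncard * F.ncard = (ebd G F).ncard := by
    rw [← hFopt, ratio, div_mul_cancel₀ _ (by exact_mod_cast (by omega : F.ncard ≠ 0))]
  have hcard : ((F \ A).ncard : ℝ) = F.ncard - A.ncard := by
    rw [eq_sub_iff_add_eq]
    exact_mod_cast hFAcard
  rw [hcard] at hFAbd
  rw [le_div_iff₀ (by exact_mod_cast hApos)]
  linarith

theorem exists_sep_div_ge_of_isop_two_mul_lt [Nonempty V]
    (hfin : ∀ A : Set V, A.Finite → A.Nonempty → (ebd G A).Finite)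
    {m : ℕ} (hm : 1 ≤ m) (hdrop : isop G (2 * m) < isop G m) :
    ∃ N, m < N ∧ N ≤ 2 * m ∧ (isop G m - isop G (2 * m)) / 2 ≤ sep G N / N := by
  obtain ⟨F, hF, hcard, heq⟩ := exists_optimal_isop_eq G (k := 2 * m) (by omega)
  have hmN : m < F.ncard := by
    by_contra! h
    exact hdrop.not_ge (heq ▸ isop_anti G ((ncard_pos hF.1).2 hF.2.1) h)
  refine ⟨F.ncard, hmN, hcard, ?_⟩
  rw [le_div_iff₀ (by exact_mod_cast (by omega : 0 < F.ncard)), ← heq, mul_comm]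
  calc _ ≤ F.ncard * cheeger G F := by
        gcongr
        exact isop_sub_isop_div_two_le_cheeger G hfin hF hcard (by omega)
    _ ≤ sep G F.ncard := ncard_mul_cheeger_le_sep G hF.1 le_rfl

theorem exists_sep_div_ge_of_isop_two_pow_mul_le [Nonempty V]
    (hfin : ∀ A : Set V, A.Finite → A.Nonempty → (ebd G A).Finite)
    {n t : ℕ} (hn : 1 ≤ n) (ht : 0 < t) (hpos : 0 < isop G n)
    (hdrop : isop G (2 ^ t * n) ≤ isop G n / 2) :
    ∃ N, n < N ∧ isop G n / (4 * t) ≤ sep G N / N := by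
  obtain ⟨i, -, hi⟩ := exists_sub_succ_ge_div (f := fun i => isop G (2 ^ i * n)) ht
  have hni : n ≤ 2 ^ i * n := Nat.le_mul_of_pos_left n (by positivity)
  have hstep : isop G n / (2 * t) ≤ isop G (2 ^ i * n) - isop G (2 * (2 ^ i * n)) :=
    calc isop G n / (2 * t) = (isop G n - isop G n / 2) / t := by ring
      _ ≤ (isop G (2 ^ 0 * n) - isop G (2 ^ t * n)) / t := by rw [pow_zero, one_mul]; gcongr
      _ ≤ _ := by rwa [pow_succ, mul_comm _ 2, mul_assoc] at hi
  obtain ⟨N, hN, -, hsep⟩ := exists_sep_div_ge_of_isop_two_mul_lt G hfin (m := 2 ^ i * n)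
    (by omega) (by linarith [show 0 < isop G n / (2 * t) by positivity])
  refine ⟨N, by omega, le_trans ?_ hsep⟩
  calc isop G n / (4 * t) = isop G n / (2 * t) / 2 := by ring
    _ ≤ _ := by gcongr

theorem isop_two_pow_mul_le_half {C₁ C₂ α β : ℝ} (hC₁ : 0 < C₁) (hC₂ : 0 < C₂) (hβ : 0 < β)
    (hiso : ∀ n : ℕ, 2 ≤ n →
      C₁ / (Real.log n) ^ α ≤ isop G n ∧ isop G n ≤ C₂ / (Real.log n) ^ β)
    {n t : ℕ} (hn : 2 ≤ n)
    (ht : (2 * C₂ / C₁) ^ (1 / β) * Real.log n ^ (α / β) ≤ t * Real.log 2) :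
    isop G (2 ^ t * n) ≤ isop G n / 2 := by
  set x := Real.log n
  have hx : 0 < x := Real.log_pos (by exact_mod_cast hn)
  set y := Real.log ((2 ^ t * n : ℕ) : ℝ)
  have hy : (2 * C₂ / C₁) ^ (1 / β) * x ^ (α / β) ≤ y := by
    have : y = t * Real.log 2 + x := by
      simp only [y, x, Nat.cast_mul, Nat.cast_pow, Nat.cast_ofNat]
      rw [Real.log_mul (by positivity) (by positivity), Real.log_pow]
    linarith
  have hkey : 2 * C₂ / C₁ * x ^ α ≤ y ^ β :=
    calc 2 * C₂ / C₁ * x ^ α = ((2 * C₂ / C₁) ^ (1 / β) * x ^ (α / β)) ^ β := by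
          rw [Real.mul_rpow (by positivity) (by positivity), ← Real.rpow_mul (by positivity),
            ← Real.rpow_mul hx.le, one_div_mul_cancel hβ.ne', div_mul_cancel₀ _ hβ.ne',
            Real.rpow_one]
      _ ≤ y ^ β := Real.rpow_le_rpow (by positivity) hy hβ.le
  calc isop G (2 ^ t * n) ≤ C₂ / y ^ β :=
        (hiso _ (hn.trans (Nat.le_mul_of_pos_left n (by positivity)))).2
    _ ≤ C₂ / (2 * C₂ / C₁ * x ^ α) := div_le_div_of_nonneg_left hC₂.le (by positivity) hkey
    _ = C₁ / x ^ α / 2 := by field_simp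
    _ ≤ isop G n / 2 := by gcongr; exact (hiso n hn).1

theorem exists_isop_two_pow_mul_le_half {C₁ C₂ α β : ℝ} (hC₁ : 0 < C₁) (hC₂ : 0 < C₂)
    (hα : 0 < α) (hβ : 0 < β)
    (hiso : ∀ n : ℕ, 2 ≤ n →
      C₁ / (Real.log n) ^ α ≤ isop G n ∧ isop G n ≤ C₂ / (Real.log n) ^ β)
    {n : ℕ} (hn : 3 ≤ n) :
    ∃ t : ℕ, 0 < t ∧ (t : ℝ) ≤ ((2 * C₂ / C₁) ^ (1 / β) / Real.log 2 + 2) * Real.log n ^ (α / β) ∧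
      isop G (2 ^ t * n) ≤ isop G n / 2 := by
  set B := (2 * C₂ / C₁) ^ (1 / β) / Real.log 2
  set y := Real.log n ^ (α / β)
  have hy : 1 ≤ y := by
    refine Real.one_le_rpow ?_ (by positivity)
    rw [Real.le_log_iff_exp_le (by positivity)]
    calc Real.exp 1 ≤ 3 := (Real.exp_one_lt_d9.trans (by norm_num)).le
      _ ≤ n := by exact_mod_cast hn
  refine ⟨⌈B * y⌉₊ + 1, by omega, ?_, isop_two_pow_mul_le_half G hC₁ hC₂ hβ hiso (by omega) ?_⟩
  · have := Nat.ceil_lt_add_one (show 0 ≤ B * y by positivity)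
    push_cast
    nlinarith
  · rw [← div_mul_cancel₀ ((2 * C₂ / C₁) ^ (1 / β)) (Real.log_pos one_lt_two).ne', mul_right_comm]
    gcongr
    push_cast
    linarith [Nat.le_ceil (B * y)]

end SepProfile

theorem stmt11_general {V : Type*} [Infinite V] (G : SimpleGraph V)
    (C₁ C₂ α β : ℝ) (hC₁ : 0 < C₁) (hC₂ : 0 < C₂) (hα : 0 < α) (hβ : 0 < β)
    (hiso : ∀ n : ℕ, 2 ≤ n →
      C₁ / (Real.log n) ^ α ≤ isop G n ∧ isop G n ≤ C₂ / (Real.log n) ^ β) :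
    ∃ K > (0:ℝ), ∀ N₀ : ℕ, ∃ N : ℕ, N₀ ≤ N ∧
      K * isop G N / (Real.log N) ^ (α / β) ≤ sep G N / (N : ℝ) := by
  have hpos : ∀ n, 2 ≤ n → 0 < isop G n := fun n hn =>
    (div_pos hC₁ (Real.rpow_pos_of_pos (Real.log_pos (by exact_mod_cast hn)) α)).trans_le
      (hiso n hn).1
  have hfin : ∀ A : Set V, A.Finite → A.Nonempty → (ebd G A).Finite :=
    fun A hA hne => ebd_finite_of_isop_pos G hpos hA hne
  set B := (2 * C₂ / C₁) ^ (1 / β) / Real.log 2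
  refine ⟨1 / (4 * (B + 2)), by positivity, fun N₀ => ?_⟩
  set n := max N₀ 3
  obtain ⟨t, ht, htB, hdrop⟩ :=
    exists_isop_two_pow_mul_le_half G hC₁ hC₂ hα hβ hiso (le_max_right N₀ 3)
  obtain ⟨N, hnN, hsep⟩ :=
    exists_sep_div_ge_of_isop_two_pow_mul_le G hfin (by omega) ht (hpos n (by omega)) hdrop
  refine ⟨N, (le_max_left N₀ 3).trans hnN.le, le_trans ?_ hsep⟩
  have hlogN : Real.log n ^ (α / β) ≤ Real.log N ^ (α / β) :=
    Real.rpow_le_rpow (Real.log_nonneg (by exact_mod_cast (by omega : 1 ≤ n)))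
      (Real.log_le_log (by positivity) (by exact_mod_cast hnN.le)) (by positivity)
  calc 1 / (4 * (B + 2)) * isop G N / Real.log N ^ (α / β)
      = isop G N / (4 * ((B + 2) * Real.log N ^ (α / β))) := by field_simp
    _ ≤ isop G n / (4 * t) := by
      gcongr
      · exact isop_nonneg G n
      · exact isop_anti G (by omega) hnN.le
      · exact htB.trans (by gcongr)

theorem stmt11 {V : Type*} [Infinite V] (G : SimpleGraph V) (hconn : G.Connected)
    (D : ℕ) (hdeg : DegLE G D) (hamen : Amenable G) (hPSI : HasPSI G)
    (C₁ C₂ α β : ℝ) (hC₁ : 0 < C₁) (hC₂ : 0 < C₂) (hα : 0 < α) (hβ : 0 < β)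
    (hiso : ∀ n : ℕ, 2 ≤ n →
      C₁ / (Real.log n) ^ α ≤ isop G n ∧ isop G n ≤ C₂ / (Real.log n) ^ β) :
    ∃ K > (0:ℝ), ∀ N₀ : ℕ, ∃ N : ℕ, N₀ ≤ N ∧
      K * isop G N / (Real.log N) ^ (α / β) ≤ sep G N / (N : ℝ) :=
  stmt11_general G C₁ C₂ α β hC₁ hC₂ hα hβ hiso
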